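/- arXiv:2201.10127 — 5 statements merged into one kernel-verified Lean document; each statement's English description precedes it below -/
import Mathlib

section
/- With θ_B uniform on [l_B,h_B] and θ_S uniform on [l_S,h_S], the buyer's ex-ante expected utility equals U_B = ((h_B² + h_B·l_B + l_B²)/(3(h_S − l_S)))·[(α_B1/α_S1 − α_B2/α_S2)·(1 − α_B1/2 − (α_S1/4)·(α_B1/α_S1 + α_B2/α_S2)) + 2(α_B2/α_S2)·(1 − α_B2/2) − α_B2²/(2α_S2)] − l_S·((h_B + l_B)/(h_S − l_S))·(1 − α_B2/2) + l_S²·α_S2/(2(h_S − l_S)). -/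
open intervalIntegral

lemma lin_int (A C k a b : ℝ) :
    ∫ t in a..b, (A + C * t) * k = (A * (b - a) + C * (b ^ 2 - a ^ 2) / 2) * k := by
  have h : ∫ t in a..b, (A + C * t) * k
      = ∫ t in a..b, ((A * k) + (C * k) * t) := by
    apply intervalIntegral.integral_congr
    intro t _; ring
  rw [h, intervalIntegral.integral_add intervalIntegrable_const
    (intervalIntegrable_id.const_mul _), intervalIntegral.integral_const,
    intervalIntegral.integral_const_mul, integral_id]
  rw [smul_eq_mul]; ring

lemma quad_int (c2 c1 c0 k a b : ℝ) :
    ∫ x in a..b, (c2 * x ^ 2 + c1 * x + c0) * k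
      = (c2 * (b ^ 3 - a ^ 3) / 3 + c1 * (b ^ 2 - a ^ 2) / 2 + c0 * (b - a)) * k := by
  have h : ∫ x in a..b, (c2 * x ^ 2 + c1 * x + c0) * k
      = ∫ x in a..b, ((c2 * k) * x ^ 2 + ((c1 * k) * x + c0 * k)) := by
    apply intervalIntegral.integral_congr
    intro x _; ring
  rw [h, intervalIntegral.integral_add, intervalIntegral.integral_add,
    intervalIntegral.integral_const_mul, intervalIntegral.integral_const_mul,
    integral_pow, integral_id, intervalIntegral.integral_const]
  · push_cast; rw [smul_eq_mul]; ring
  · exact (intervalIntegrable_id.const_mul _)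
  · exact intervalIntegrable_const
  · exact ((continuous_pow 2).intervalIntegrable a b).const_mul _
  · exact (((continuous_const.mul continuous_id).add continuous_const)).intervalIntegrable a b

theorem buyer_exante_expected_utility
    (lB hB lS hS αB1 αB2 αS1 αS2 : ℝ)
    (hlB : lB < hB) (hlS : lS < hS)
    (hB1 : 0 < αB1) (hB2 : 0 < αB2) (hS1 : 0 < αS1) (hS2 : 0 < αS2)
    (hBord : αB2 ≤ αB1) (hSord : αS1 ≤ αS2)
    (hlim : ∀ θB ∈ Set.Icc lB hB,
      lS ≤ (αB2 / αS2) * θB ∧ (αB1 / αS1) * θB ≤ hS) :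
    (∫ θB in lB..hB,
        ((2 * ∫ t in lS..((αB2 / αS2) * θB),
            (θB - (αB2 * θB + αS2 * t) / 2) * (1 / (hS - lS)))
          + ∫ t in ((αB2 / αS2) * θB)..((αB1 / αS1) * θB),
            (θB - (αB1 * θB + αS1 * t) / 2) * (1 / (hS - lS)))
          * (1 / (hB - lB))) =
      ((hB ^ 2 + hB * lB + lB ^ 2) / (3 * (hS - lS))) *
          ((αB1 / αS1 - αB2 / αS2) *
              (1 - αB1 / 2 - (αS1 / 4) * (αB1 / αS1 + αB2 / αS2))
            + 2 * (αB2 / αS2) * (1 - αB2 / 2) - αB2 ^ 2 / (2 * αS2))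
        - lS * ((hB + lB) / (hS - lS)) * (1 - αB2 / 2)
        + lS ^ 2 * αS2 / (2 * (hS - lS)) := by
  have hS1' : αS1 ≠ 0 := hS1.ne'
  have hS2' : αS2 ≠ 0 := hS2.ne'
  have hBL : hB - lB ≠ 0 := sub_ne_zero.mpr hlB.ne'
  have hSL : hS - lS ≠ 0 := sub_ne_zero.mpr hlS.ne'
  set r1 := αB1 / αS1 with hr1
  set r2 := αB2 / αS2 with hr2
  set c2 : ℝ := 2 * ((1 - αB2 / 2) * r2) - (αS2 / 2) * r2 ^ 2
      + (1 - αB1 / 2) * (r1 - r2) - (αS1 / 4) * (r1 ^ 2 - r2 ^ 2) with hc2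
  set c1 : ℝ := -(2 * lS * (1 - αB2 / 2)) with hc1
  set c0 : ℝ := (αS2 / 2) * lS ^ 2 with hc0
  have key : (∫ θB in lB..hB,
        ((2 * ∫ t in lS..((αB2 / αS2) * θB),
            (θB - (αB2 * θB + αS2 * t) / 2) * (1 / (hS - lS)))
          + ∫ t in ((αB2 / αS2) * θB)..((αB1 / αS1) * θB),
            (θB - (αB1 * θB + αS1 * t) / 2) * (1 / (hS - lS)))
          * (1 / (hB - lB)))
      = ∫ θ in lB..hB, (c2 * θ ^ 2 + c1 * θ + c0) * ((1 / (hS - lS)) * (1 / (hB - lB))) := by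
    apply intervalIntegral.integral_congr
    intro θ _
    simp only
    have e1 : ∫ t in lS..((αB2 / αS2) * θ),
        (θ - (αB2 * θ + αS2 * t) / 2) * (1 / (hS - lS))
        = ((θ - αB2 * θ / 2) * ((αB2 / αS2) * θ - lS)
            + (-(αS2 / 2)) * (((αB2 / αS2) * θ) ^ 2 - lS ^ 2) / 2) * (1 / (hS - lS)) := by
      rw [show (∫ t in lS..((αB2 / αS2) * θ),
          (θ - (αB2 * θ + αS2 * t) / 2) * (1 / (hS - lS)))
          = ∫ t in lS..((αB2 / αS2) * θ),
            ((θ - αB2 * θ / 2) + (-(αS2 / 2)) * t) * (1 / (hS - lS)) from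
        intervalIntegral.integral_congr (fun t _ => by ring)]
      exact lin_int _ _ _ _ _
    have e2 : ∫ t in ((αB2 / αS2) * θ)..((αB1 / αS1) * θ),
        (θ - (αB1 * θ + αS1 * t) / 2) * (1 / (hS - lS))
        = ((θ - αB1 * θ / 2) * ((αB1 / αS1) * θ - (αB2 / αS2) * θ)
            + (-(αS1 / 2)) * (((αB1 / αS1) * θ) ^ 2 - ((αB2 / αS2) * θ) ^ 2) / 2)
            * (1 / (hS - lS)) := by
      rw [show (∫ t in ((αB2 / αS2) * θ)..((αB1 / αS1) * θ),
          (θ - (αB1 * θ + αS1 * t) / 2) * (1 / (hS - lS)))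
          = ∫ t in ((αB2 / αS2) * θ)..((αB1 / αS1) * θ),
            ((θ - αB1 * θ / 2) + (-(αS1 / 2)) * t) * (1 / (hS - lS)) from
        intervalIntegral.integral_congr (fun t _ => by ring)]
      exact lin_int _ _ _ _ _
    rw [e1, e2, hc2, hc1, hc0, hr1, hr2]
    field_simp
    ring
  rw [key, quad_int]
  rw [hc2, hc1, hc0, hr1, hr2]
  field_simp
  ring
end

section
/- With θ_S uniform on [l_S,h_S] and θ_B uniform on [l_B,h_B], the seller's ex-ante expected utility equals U_S = ((h_S² + h_S·l_S + l_S²)/(3(h_B − l_B)))·[(α_S2/α_B2 − α_S1/α_B1)·((α_B1/4)·(α_S2/α_B2 + α_S1/α_B1) + α_S1/2 − 1) + 2(α_S2/α_B2)·(1 − α_S2/2) − α_S2²/(2α_B2)] − h_B·((h_S + l_S)/(h_B − l_B))·(1 − α_S2/2) + h_B²·α_B2/(2(h_B − l_B)). -/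
set_option maxHeartbeats 1600000


open intervalIntegral

lemma lin_integral (a b c d u v : ℝ) :
    (∫ t in u..v, ((a * t + b) / 2 - c) * d)
      = a * d * (v ^ 2 - u ^ 2) / 4 + (b / 2 - c) * d * (v - u) := by
  have h : (fun t : ℝ => ((a * t + b) / 2 - c) * d)
      = fun t : ℝ => (a * d / 2) * t + ((b / 2 - c) * d) :=
    funext fun t => by ring
  have i1 : IntervalIntegrable (fun t : ℝ => (a * d / 2) * t)
      MeasureTheory.volume u v := Continuous.intervalIntegrable (by continuity) _ _
  have i2 : IntervalIntegrable (fun _ : ℝ => (b / 2 - c) * d)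
      MeasureTheory.volume u v := Continuous.intervalIntegrable (by continuity) _ _
  rw [h, intervalIntegral.integral_add i1 i2,
    intervalIntegral.integral_const_mul, integral_id,
    intervalIntegral.integral_const, smul_eq_mul]
  ring

lemma quad_integral (A B C l h : ℝ) :
    (∫ θ in l..h, (A * θ ^ 2 + B * θ + C))
      = A * (h ^ 3 - l ^ 3) / 3 + B * (h ^ 2 - l ^ 2) / 2 + C * (h - l) := by
  have h1 : (fun θ : ℝ => A * θ ^ 2 + B * θ + C)
      = fun θ : ℝ => ((fun θ : ℝ => A * θ ^ 2) θ + (fun θ : ℝ => B * θ) θ) + C :=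
    funext fun θ => by ring
  have i1 : IntervalIntegrable (fun θ : ℝ => A * θ ^ 2)
      MeasureTheory.volume l h := Continuous.intervalIntegrable (by continuity) _ _
  have i2 : IntervalIntegrable (fun θ : ℝ => B * θ)
      MeasureTheory.volume l h := Continuous.intervalIntegrable (by continuity) _ _
  have i3 : IntervalIntegrable (fun _ : ℝ => C)
      MeasureTheory.volume l h := Continuous.intervalIntegrable (by continuity) _ _
  rw [h1, intervalIntegral.integral_add (i1.add i2) i3,
    intervalIntegral.integral_add i1 i2,
    intervalIntegral.integral_const_mul, intervalIntegral.integral_const_mul,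
    integral_pow, integral_id, intervalIntegral.integral_const, smul_eq_mul]
  push_cast
  ring

theorem seller_exante_expected_utility
    (lB hB lS hS αB1 αB2 αS1 αS2 : ℝ)
    (hlB : lB < hB) (hlS : lS < hS)
    (hB1 : 0 < αB1) (hB2 : 0 < αB2) (hS1 : 0 < αS1) (hS2 : 0 < αS2)
    (hBord : αB2 ≤ αB1) (hSord : αS1 ≤ αS2)
    (hlim : ∀ θS ∈ Set.Icc lS hS,
      lB ≤ (αS1 / αB1) * θS ∧ (αS2 / αB2) * θS ≤ hB) :
    (∫ θS in lS..hS,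
        ((2 * ∫ t in ((αS2 / αB2) * θS)..hB,
            ((αB2 * t + αS2 * θS) / 2 - θS) * (1 / (hB - lB)))
          + ∫ t in ((αS1 / αB1) * θS)..((αS2 / αB2) * θS),
            ((αB1 * t + αS1 * θS) / 2 - θS) * (1 / (hB - lB)))
          * (1 / (hS - lS))) =
      ((hS ^ 2 + hS * lS + lS ^ 2) / (3 * (hB - lB))) *
          ((αS2 / αB2 - αS1 / αB1) *
              ((αB1 / 4) * (αS2 / αB2 + αS1 / αB1) + αS1 / 2 - 1)
            + 2 * (αS2 / αB2) * (1 - αS2 / 2) - αS2 ^ 2 / (2 * αB2))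
        - hB * ((hS + lS) / (hB - lB)) * (1 - αS2 / 2)
        + hB ^ 2 * αB2 / (2 * (hB - lB)) := by
  have hdB : hB - lB ≠ 0 := sub_ne_zero.mpr hlB.ne'
  have hdS : hS - lS ≠ 0 := sub_ne_zero.mpr hlS.ne'
  have hb1 : αB1 ≠ 0 := hB1.ne'
  have hb2 : αB2 ≠ 0 := hB2.ne'
  set A : ℝ := (αB1 * ((αS2 / αB2) ^ 2 - (αS1 / αB1) ^ 2) / 4
      + (αS1 / 2 - 1) * ((αS2 / αB2) - (αS1 / αB1))
      - αB2 * (αS2 / αB2) ^ 2 / 2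
      + (2 - αS2) * (αS2 / αB2)) / ((hB - lB) * (hS - lS)) with hA
  set B : ℝ := (αS2 - 2) * hB / ((hB - lB) * (hS - lS)) with hBdef
  set C : ℝ := αB2 * hB ^ 2 / (2 * (hB - lB) * (hS - lS)) with hC
  have key : ∀ θS : ℝ,
      ((2 * ∫ t in ((αS2 / αB2) * θS)..hB,
            ((αB2 * t + αS2 * θS) / 2 - θS) * (1 / (hB - lB)))
          + ∫ t in ((αS1 / αB1) * θS)..((αS2 / αB2) * θS),
            ((αB1 * t + αS1 * θS) / 2 - θS) * (1 / (hB - lB)))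
          * (1 / (hS - lS)) = A * θS ^ 2 + B * θS + C := by
    intro θS
    rw [lin_integral, lin_integral, hA, hBdef, hC]
    field_simp
    ring
  calc (∫ θS in lS..hS,
        ((2 * ∫ t in ((αS2 / αB2) * θS)..hB,
            ((αB2 * t + αS2 * θS) / 2 - θS) * (1 / (hB - lB)))
          + ∫ t in ((αS1 / αB1) * θS)..((αS2 / αB2) * θS),
            ((αB1 * t + αS1 * θS) / 2 - θS) * (1 / (hB - lB)))
          * (1 / (hS - lS)))
      = ∫ θS in lS..hS, (A * θS ^ 2 + B * θS + C) := by
        exact intervalIntegral.integral_congr fun θS _ => key θS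
    _ = A * (hS ^ 3 - lS ^ 3) / 3 + B * (hS ^ 2 - lS ^ 2) / 2 + C * (hS - lS) :=
        quad_integral A B C lS hS
    _ = _ := by
        rw [hA, hBdef, hC]
        field_simp
        ring
end

section
/- The system of equations 3α_B1 − α_B2 − 2 = 0, α_B1 − 5α_B2 + 2 = 0, and (1/α_B2 − 1/α_B1)·(α_S·(α_B1 + 3α_B2) − 2α_B2) − 6α_S + 4 + 3α_B2 = 0 has the unique solution α_B1 = 6/7, α_B2 = 4/7, α_S = 424/378 (≈ 1.12169), among positive reals with α_B1 ≠ α_B2. -/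
theorem case2_system_unique_solution (αB1 αB2 αS : ℝ)
    (h1 : 0 < αB1) (h2 : 0 < αB2) (h3 : 0 < αS) (hne : αB1 ≠ αB2) :
    (3 * αB1 - αB2 - 2 = 0 ∧ αB1 - 5 * αB2 + 2 = 0 ∧
        (1 / αB2 - 1 / αB1) * (αS * (αB1 + 3 * αB2) - 2 * αB2) - 6 * αS + 4 + 3 * αB2 = 0) ↔
      (αB1 = 6 / 7 ∧ αB2 = 4 / 7 ∧ αS = 424 / 378) := by
  constructor
  · rintro ⟨e1, e2, e3⟩
    have hb1 : αB1 = 6 / 7 := by linarith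
    have hb2 : αB2 = 4 / 7 := by linarith
    subst hb1; subst hb2
    norm_num at e3
    refine ⟨rfl, rfl, by linarith⟩
  · rintro ⟨hb1, hb2, hs⟩
    subst hb1; subst hb2; subst hs
    norm_num
end

section
/- The best-response maps β_B(α_S) = 2/3 (constant, independent of α_S) and β_S(α_B) = 2/3 + α_B/2, arising from the uniform [0,1] equal-scale-factor case, have a unique fixed point (α_B*, α_S*) = (2/3, 1), and this pair is a Nash equilibrium: U_B(α_B, 1) ≤ U_B(2/3, 1) for all α_B ∈ (0,1] and U_S(2/3, α_S) ≤ U_S(2/3, 1) for all α_S > 0. -/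
theorem best_response_fixed_point_nash :
    let UB : ℝ → ℝ → ℝ := fun aB aS => aB * (4 - 3 * aB) / (6 * aS)
    let US : ℝ → ℝ → ℝ := fun aB aS =>
      aS * (4 - 3 * aS) / (6 * aB) - (1 - aS / 2) + aB / 2
    (∀ aB aS : ℝ, (aB = 2 / 3 ∧ aS = 2 / 3 + aB / 2) ↔ (aB = 2 / 3 ∧ aS = 1)) ∧
    (∀ aB ∈ Set.Ioc (0:ℝ) 1, UB aB 1 ≤ UB (2/3) 1) ∧
    (∀ aS : ℝ, 0 < aS → US (2/3) aS ≤ US (2/3) 1) := by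
  refine ⟨?_, ?_, ?_⟩
  · intro aB aS
    constructor <;> rintro ⟨h1, h2⟩ <;> subst h1 <;> constructor <;> linarith
  · intro aB _
    simp only
    nlinarith [sq_nonneg (3 * aB - 2)]
  · intro aS _
    simp only
    nlinarith [sq_nonneg (aS - 1)]
end

section
/- The quartic polynomial system α_S1α_B2 + α_S2(2 − 3α_B1) = 0, α_S2(2 + α_B1 − 6α_B2) + α_S1α_B2 = 0, α_B1α_S2 + α_B2(2 − 3α_S1) = 0, α_B2(2 + α_S1 − 6α_S2) + α_B1α_S2 + 3α_B2² = 0 has a positive real solution with α_B1 = 3α_B2/2 in which α_B2 is a root lying in the interval (0.58, 0.59); numerically α_B1 ≈ 0.882782, α_B2 ≈ 0.588521, α_S1 ≈ 1.2207, α_S2 ≈ 1.10806. -/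
theorem case4_system_positive_solution :
    ∃ αB1 αB2 αS1 αS2 : ℝ,
      0 < αB1 ∧ 0 < αB2 ∧ 0 < αS1 ∧ 0 < αS2 ∧
      αS1 * αB2 + αS2 * (2 - 3 * αB1) = 0 ∧
      αS2 * (2 + αB1 - 6 * αB2) + αS1 * αB2 = 0 ∧
      αB1 * αS2 + αB2 * (2 - 3 * αS1) = 0 ∧
      αB2 * (2 + αS1 - 6 * αS2) + αB1 * αS2 + 3 * αB2 ^ 2 = 0 ∧
      αB1 = 3 * αB2 / 2 ∧ 0.58 < αB2 ∧ αB2 < 0.59 := by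
  set s : ℝ := Real.sqrt 585 with hs_def
  have hs2 : s ^ 2 = 585 := Real.sq_sqrt (by norm_num)
  have hs_lb : 23.88 < s := by
    have : (23.88 : ℝ) = Real.sqrt (23.88 ^ 2) := by
      rw [Real.sqrt_sq (by norm_num)]
    rw [this, hs_def]
    exact Real.sqrt_lt_sqrt (by norm_num) (by norm_num)
  have hs_ub : s < 24.24 := by
    have : (24.24 : ℝ) = Real.sqrt (24.24 ^ 2) := by
      rw [Real.sqrt_sq (by norm_num)]
    rw [this, hs_def]
    exact Real.sqrt_lt_sqrt (by positivity) (by norm_num)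
  set b : ℝ := (s - 3) / 36 with hb_def
  have hkey : 18 * b ^ 2 + 3 * b - 8 = 0 := by
    rw [hb_def]; field_simp; nlinarith [hs2]
  refine ⟨3 * b / 2, b, (3 * b + 8) / 8, (9 * b + 8) / 12, ?_, ?_, ?_, ?_, ?_, ?_, ?_, ?_, ?_, ?_, ?_⟩
  · rw [hb_def]; nlinarith
  · rw [hb_def]; nlinarith
  · rw [hb_def]; nlinarith
  · rw [hb_def]; nlinarith
  · nlinarith [hkey]
  · nlinarith [hkey]
  · nlinarith [hkey]
  · nlinarith [hkey]
  · ring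
  · rw [hb_def]; nlinarith
  · rw [hb_def]; nlinarith
end
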